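/- Every contraction of a left increasing tree is left increasing: if the increasing tree (T,λ) = τ(P), P ∈ Comp_n, is left increasing, then for every subset A ⊆ [n] the A-contraction τ(P|_A) of (T,λ) is left increasing. -/

import Mathlib

set_option linter.unreachableTactic false
set_option linter.unusedTactic false
set_option maxHeartbeats 1000000


open Finset

/-- Candidate set compositions: lists of finite sets of positive naturals. -/
abbrev SC : Type := List (Finset ℕ)

/-- The underlying (ground) set of a list of blocks. -/
def ground (L : SC) : Finset ℕ := L.foldr (· ∪ ·) ∅

/-- `L` is a set composition of `[n] = {1,…,n}`. -/
def IsSetComp (n : ℕ) (L : SC) : Prop :=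
  (∀ B ∈ L, B.Nonempty) ∧ L.Pairwise Disjoint ∧ ground L = Finset.Icc 1 n

/-- The degree of a set composition (largest element of its ground set). -/
def maxG (L : SC) : ℕ := (ground L).sup id

/-- The 1-based rank of `x` inside the finite set `A` (the position of `x` in the
increasing enumeration of `A`, when `x ∈ A`); this is the order preserving
relabelling `A → [|A|]`. -/
def rankIn (A : Finset ℕ) (x : ℕ) : ℕ := (A.filter (· ≤ x)).card

/-- `P|_A` : intersect the blocks with `A`, delete the empty intersections, and
relabel along the order preserving bijection `A → [|A|]`. -/
def restrictSC (A : Finset ℕ) (L : SC) : SC :=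
  (L.map fun B => (B ∩ A).image (rankIn A)).filter fun B => decide B.Nonempty

/-- Shift all entries of all blocks by `p`. -/
def shiftSC (p : ℕ) (L : SC) : SC := L.map (Finset.image (· + p))

/-- The restricted product `∗̄` on set compositions:
`P ∗̄ Q = (P₁,…,P_k, p+Q₁,…,p+Q_l)` for `P ∈ Comp_p`. -/
def barMul (P Q : SC) : SC := P ++ shiftSC (maxG P) Q

/-- The order-preserving relabelling map `S → T` (`is_{S,T}`), for finite sets
of equal cardinality. -/
def relabelFun (S T : Finset ℕ) (x : ℕ) : ℕ := (T.sort (· ≤ ·)).getD (rankIn S x - 1) 0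

/-- Relabel a set composition of `S` along the order-preserving bijection `S → T`. -/
def relabelSC (S T : Finset ℕ) (L : SC) : SC := L.map (Finset.image (relabelFun S T))

variable (R : Type) [CommRing R]

/-- The free module with basis indexed by lists of blocks; the twisted descent
algebra `T_•` is its submodule spanned by the set compositions. -/
abbrev FM := SC →₀ R

/-- `T_•` as a submodule: the span of the set compositions. -/
noncomputable def Tspan : Submodule R (FM R) :=
  Submodule.span R {f : FM R | ∃ n P, IsSetComp n P ∧ f = Finsupp.single P 1}

/-- The restricted product `∗̄` as a bilinear map. -/
noncomputable def barL : FM R →ₗ[R] FM R →ₗ[R] FM R :=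
  Finsupp.lift _ R SC fun P => Finsupp.lift _ R SC fun Q => Finsupp.single (barMul P Q) 1

/-- The symmetrized product `∗̂` on basis elements:
`P ∗̂ Q = Σ is_{[p],A}(P) ∗ is_{[q],B}(Q)` over all `A ⊔ B = [p+q]`, `|A| = p`. -/
noncomputable def hatB (P Q : SC) : FM R :=
  ∑ A ∈ (Finset.Icc 1 (maxG P + maxG Q)).powerset.filter (fun A => A.card = maxG P),
    Finsupp.single
      (relabelSC (Finset.Icc 1 (maxG P)) A P ++
        relabelSC (Finset.Icc 1 (maxG Q)) ((Finset.Icc 1 (maxG P + maxG Q)) \ A) Q) 1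

/-- The symmetrized product `∗̂` as a bilinear map. -/
noncomputable def hatL : FM R →ₗ[R] FM R →ₗ[R] FM R :=
  Finsupp.lift _ R SC fun P => Finsupp.lift _ R SC fun Q => hatB R P Q

/-- `T_• ⊗ T_•`, realized as the free module on pairs of basis elements. -/
abbrev FM2 := (SC × SC) →₀ R

/-- `T_• ⊗ T_• ⊗ T_•`, realized as the free module on triples of basis elements. -/
abbrev FM3 := (SC × SC × SC) →₀ R

/-- The restricted coproduct `δ̄ (P) = Σ_{p=0}^n P|_{[p]} ⊗ P|_{{p+1,…,n}}`. -/
noncomputable def dBarL : FM R →ₗ[R] FM2 R :=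
  Finsupp.lift _ R SC fun P =>
    ∑ p ∈ Finset.range (maxG P + 1),
      Finsupp.single
        (restrictSC (Finset.Icc 1 p) P, restrictSC (Finset.Icc (p+1) (maxG P)) P) 1

/-- The cosymmetrized coproduct `δ̂ (P) = Σ_{A ⊔ B = [n]} P|_A ⊗ P|_B`. -/
noncomputable def dHatL : FM R →ₗ[R] FM2 R :=
  Finsupp.lift _ R SC fun P =>
    ∑ A ∈ (Finset.Icc 1 (maxG P)).powerset,
      Finsupp.single (restrictSC A P, restrictSC ((Finset.Icc 1 (maxG P)) \ A) P) 1

/-- Apply a coproduct to the first tensor factor:  `d ⊗ id : T⊗T → T⊗T⊗T`. -/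
noncomputable def applyFst (d : FM R →ₗ[R] FM2 R) : FM2 R →ₗ[R] FM3 R :=
  Finsupp.lift _ R (SC × SC) fun PQ =>
    Finsupp.mapDomain (fun RS : SC × SC => (RS.1, RS.2, PQ.2)) (d (Finsupp.single PQ.1 1))

/-- Apply a coproduct to the second tensor factor:  `id ⊗ d : T⊗T → T⊗T⊗T`. -/
noncomputable def applySnd (d : FM R →ₗ[R] FM2 R) : FM2 R →ₗ[R] FM3 R :=
  Finsupp.lift _ R (SC × SC) fun PQ =>
    Finsupp.mapDomain (fun RS : SC × SC => (PQ.1, RS.1, RS.2)) (d (Finsupp.single PQ.2 1))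

/-- `ε ⊗ id : T⊗T → T`, where `ε` is the projection onto `T_0 ≅ R`
(the coefficient of the empty set composition). -/
noncomputable def epsFst : FM2 R →ₗ[R] FM R :=
  Finsupp.lift _ R (SC × SC) fun PQ =>
    if PQ.1 = ([] : SC) then Finsupp.single PQ.2 1 else 0

/-- `id ⊗ ε : T⊗T → T`. -/
noncomputable def epsSnd : FM2 R →ₗ[R] FM R :=
  Finsupp.lift _ R (SC × SC) fun PQ =>
    if PQ.2 = ([] : SC) then Finsupp.single PQ.1 1 else 0

/-- The twist map `x ⊗ y ↦ y ⊗ x` on `T_• ⊗ T_•`. -/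
noncomputable def twistL : FM2 R →ₗ[R] FM2 R :=
  Finsupp.lift _ R (SC × SC) fun PQ => Finsupp.single (PQ.2, PQ.1) 1

/-- The counit: projection onto the degree-0 component `T_0 ≅ R`. -/
noncomputable def counitL : FM R →ₗ[R] R :=
  Finsupp.lift _ R SC fun P => if P = ([] : SC) then 1 else 0

inductive PTree : Type
  | eps : PTree
  | wedge : PTree → PTree → List PTree → PTree

inductive LTree : Type
  | eps : LTree
  | wedge : ℕ → LTree → LTree → List LTree → LTree

namespace LTree

def levels : LTree → List ℕ
  | .eps => []
  | .wedge r t0 t1 rest =>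
      r :: (t0.levels ++ t1.levels ++ (rest.attach.map (fun x => x.1.levels)).flatten)
decreasing_by all_goals (first
  | (have h := List.sizeOf_lt_of_mem x.2; simp_wf; simp at h; omega)
  | (have h := List.sizeOf_lt_of_mem x.2; simp_wf; omega)
  | (simp_wf; omega))

def numLevels (t : LTree) : ℕ := t.levels.foldr max 0

def brLevels : LTree → List ℕ
  | .eps => []
  | .wedge r t0 t1 rest =>
      t0.brLevels ++ r :: t1.brLevels ++
        (rest.attach.map (fun x => r :: x.1.brLevels)).flatten
decreasing_by all_goals (first
  | (have h := List.sizeOf_lt_of_mem x.2; simp_wf; simp at h; omega)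
  | (have h := List.sizeOf_lt_of_mem x.2; simp_wf; omega)
  | (simp_wf; omega))

def addLevels (c : ℕ) : LTree → LTree
  | .eps => .eps
  | .wedge r t0 t1 rest =>
      .wedge (r + c) (t0.addLevels c) (t1.addLevels c)
        (rest.attach.map (fun x => x.1.addLevels c))
decreasing_by all_goals (first
  | (have h := List.sizeOf_lt_of_mem x.2; simp_wf; simp at h; omega)
  | (have h := List.sizeOf_lt_of_mem x.2; simp_wf; omega)
  | (simp_wf; omega))

end LTree

def Fgt : LTree → PTree
  | .eps => .eps
  | .wedge _ t0 t1 rest => .wedge (Fgt t0) (Fgt t1) (rest.attach.map (fun x => Fgt x.1))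
decreasing_by all_goals (first
  | (have h := List.sizeOf_lt_of_mem x.2; simp_wf; simp at h; omega)
  | (have h := List.sizeOf_lt_of_mem x.2; simp_wf; omega)
  | (simp_wf; omega))

def graftP (s : PTree) : PTree → PTree
  | .eps => s
  | .wedge t0 t1 rest => .wedge (graftP s t0) t1 rest

def Inc : PTree → LTree
  | .eps => .eps
  | .wedge t0 t1 rest =>
      let incs := Inc t0 :: Inc t1 :: rest.attach.map (fun x => Inc x.1)
      let offs := (incs.map LTree.numLevels).scanl (· + ·) 1
      match (incs.zip offs).map (fun p => p.1.addLevels p.2) with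
      | s0 :: s1 :: srest => .wedge 1 s0 s1 srest
      | _ => .eps
decreasing_by all_goals (first
  | (have h := List.sizeOf_lt_of_mem x.2; simp_wf; simp at h; omega)
  | (have h := List.sizeOf_lt_of_mem x.2; simp_wf; omega)
  | (simp_wf; omega))

def brPaths : LTree → List (List ℕ)
  | .eps => []
  | .wedge _ t0 t1 rest =>
      (brPaths t0).map (fun p => 0 :: p) ++
        ((((t1 :: rest).attach.map (fun x => brPaths x.1)).zipIdx.map Prod.swap |>.map
          (fun is => ([] : List ℕ) :: is.2.map (fun p => (is.1 + 1) :: p))).flatten)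
decreasing_by all_goals (first
  | (have h := List.sizeOf_lt_of_mem x.2; simp_wf; simp at h; omega)
  | (have h := List.sizeOf_lt_of_mem x.2; simp_wf; omega)
  | (simp_wf; omega))

def sigmaOf (t : LTree) : List (Finset ℕ) :=
  let w := t.brLevels
  (List.range (w.foldr max 0)).map fun i =>
    ((List.range w.length).filter (fun j => w.getD j 0 = i + 1)).toFinset.image (· + 1)

/-- The level function is strictly increasing from the root down, all levels
being `> lo`: this expresses that levels strictly increase along every path
joining a leaf to the root. -/
inductive IncrFrom : ℕ → LTree → Prop
  | eps (lo : ℕ) : IncrFrom lo .eps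
  | wedge (lo r : ℕ) (t0 t1 : LTree) (rest : List LTree) :
      lo < r → IncrFrom r t0 → IncrFrom r t1 → (∀ t ∈ rest, IncrFrom r t) →
      IncrFrom lo (.wedge r t0 t1 rest)

/-- An increasing tree: the level function is strictly increasing along every
path from a leaf to the root, and its set of values is `[k]` for some `k ≥ 0`
(it is standard). -/
def IsIncTree (t : LTree) : Prop :=
  IncrFrom 0 t ∧ t.levels.toFinset = Finset.Icc 1 t.numLevels

/-- Two vertices, recorded by their root-to-vertex paths of child indices, lie
on a common path connecting a leaf with the root iff one is an ancestor of the
other, i.e. iff one path is a prefix of the other. -/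
def OnCommonPath (p q : List ℕ) : Prop := p <+: q ∨ q <+: p

/-!
The word of an increasing tree lists the levels of its branchings in their natural order, and
`sigmaOf` reads the set composition off this word. A tree `Inc s` has a word avoiding the
patterns 312 and 212: `Inc` stacks the level ranges of the subtrees one above the other, from
left to right, and its root level 1 separates them. Conversely, an increasing tree whose word
avoids these patterns is `Inc` of its underlying tree, since the pattern `x r y` (with `r` the
root level) forces the level sets of the subtrees to be consecutive intervals, increasing from
left to right. Contracting along `A` replaces the word by its subword at the positions in `A`,
with the levels relabelled in an order preserving way, and such words still avoid the patterns.
-/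

open scoped List

lemma List.foldr_max_eq_sup (l : List ℕ) : l.foldr max 0 = l.toFinset.sup id := by
  induction l with
  | nil => simp
  | cons a l ih => simp [ih, Finset.sup_insert]

lemma List.sublist_of_getElem?_eq_some {α : Type*} {w : List α} {i j k : ℕ} {a b c : α}
    (hij : i < j) (hjk : j < k) (ha : w[i]? = some a) (hb : w[j]? = some b)
    (hc : w[k]? = some c) : [a, b, c] <+ w := by
  obtain ⟨hk, rfl⟩ := List.getElem?_eq_some_iff.1 hc
  obtain ⟨-, rfl⟩ := List.getElem?_eq_some_iff.1 hb
  obtain ⟨-, rfl⟩ := List.getElem?_eq_some_iff.1 ha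
  rw [List.sublist_iff_exists_fin_orderEmbedding_get_eq]
  refine ⟨OrderEmbedding.ofStrictMono ![⟨i, by omega⟩, ⟨j, by omega⟩, ⟨k, hk⟩] ?_, ?_⟩
  · rw [Fin.strictMono_iff_lt_succ]
    intro x
    fin_cases x <;> simp [Fin.lt_def, hij, hjk]
  · intro x
    fin_cases x <;> rfl

lemma List.exists_of_mem_getD_filter {α : Type*} {L : List (Finset α)} {p : Finset α → Bool}
    {y : α} {k : ℕ} (h : y ∈ (L.filter p).getD k ∅) :
    ∃ i, ∃ hi : i < L.length, y ∈ L[i] ∧ p L[i] ∧ (L.take i).countP p = k := by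
  induction L generalizing k with
  | nil => simp at h
  | cons B L ih =>
      by_cases hB : p B
      · rw [List.filter_cons_of_pos hB] at h
        cases k with
        | zero => exact ⟨0, by simp, by simpa using h, hB, by simp⟩
        | succ k =>
            obtain ⟨i, hi, hy, hp, hc⟩ := ih (by simpa using h)
            exact ⟨i + 1, by simpa using hi, hy, hp, by simp [hB, hc]⟩
      · rw [List.filter_cons_of_neg hB] at h
        obtain ⟨i, hi, hy, hp, hc⟩ := ih h
        exact ⟨i + 1, by simpa using hi, hy, hp, by simp [hB, hc]⟩

lemma List.countP_take_lt_countP_take {α : Type*} {L : List α} {p : α → Bool} {i j : ℕ}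
    (hij : i < j) (hi : i < L.length) (hp : p L[i]) :
    (L.take i).countP p < (L.take j).countP p := by
  have hsucc : (L.take (i + 1)).countP p = (L.take i).countP p + 1 := by
    rw [List.take_add_one, List.getElem?_eq_getElem hi, Option.toList_some, List.countP_append]
    simp [hp]
  have hle := (List.take_sublist_take_left (l := L) (show i + 1 ≤ j by omega)).countP_le (p := p)
  omega

lemma Finset.eq_Icc_of_union_eq_Icc {S T : Finset ℕ} {c K : ℕ} (hST : ∀ x ∈ S, ∀ y ∈ T, x < y)
    (h : S ∪ T = Icc (c + 1) K) :
    S = Icc (c + 1) (S.sup id) ∧ T = Icc (max c (S.sup id) + 1) K := by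
  have hmem : ∀ x, x ∈ S ∨ x ∈ T ↔ c + 1 ≤ x ∧ x ≤ K := fun x => by
    rw [← Finset.mem_union, h, Finset.mem_Icc]
  have hle : ∀ x ∈ S, x ≤ S.sup id := fun x hx => Finset.le_sup (f := id) hx
  have hsup : S.Nonempty → S.sup id ∈ S := fun hS => by
    obtain ⟨m, hm, hm'⟩ := Finset.exists_mem_eq_sup S hS id
    rwa [hm']
  constructor
  · ext x
    simp only [Finset.mem_Icc]
    refine ⟨fun hx => ⟨((hmem x).1 (.inl hx)).1, hle x hx⟩, fun ⟨h1, h2⟩ => ?_⟩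
    have hS : S.Nonempty := by
      by_contra hS
      rw [Finset.not_nonempty_iff_eq_empty.1 hS, Finset.sup_empty, Nat.bot_eq_zero] at h2
      omega
    have hK := ((hmem _).1 (.inl (hsup hS))).2
    exact ((hmem x).2 ⟨h1, by omega⟩).resolve_right fun hx => by
      have := hST _ (hsup hS) x hx
      omega
  · ext y
    simp only [Finset.mem_Icc]
    constructor
    · intro hy
      have hy' := (hmem y).1 (.inr hy)
      rcases S.eq_empty_or_nonempty with rfl | hS
      · rw [Finset.sup_empty, Nat.bot_eq_zero]
        omega
      · have := hST _ (hsup hS) y hy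
        omega
    · intro hy
      exact ((hmem y).2 ⟨by omega, hy.2⟩).resolve_left fun hyS => by
        have := hle y hyS
        omega

lemma Finset.eq_and_eq_Icc_of_insert_eq_Icc {r c N : ℕ} {F : Finset ℕ} (hF : ∀ x ∈ F, r < x)
    (h : insert r F = Icc (c + 1) N) : r = c + 1 ∧ F = Icc (c + 2) N := by
  have hr : r ∈ Icc (c + 1) N := h ▸ Finset.mem_insert_self r F
  rw [Finset.mem_Icc] at hr
  obtain rfl : r = c + 1 := by
    have hc : c + 1 ∈ insert r F := h ▸ Finset.mem_Icc.2 ⟨le_rfl, by omega⟩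
    rcases Finset.mem_insert.1 hc with hc | hc
    · exact hc.symm
    · exact absurd (hF _ hc) (by omega)
  refine ⟨rfl, ?_⟩
  rw [← Finset.erase_insert (fun hrF => lt_irrefl _ (hF _ hrF)), h, Finset.Icc_erase_left,
    ← Finset.Icc_add_one_left_eq_Ioc]
  rfl

@[elab_as_elim]
theorem LTree.induction {motive : LTree → Prop} (eps : motive .eps)
    (wedge : ∀ r t0 t1 rest, motive t0 → motive t1 → (∀ t ∈ rest, motive t) →
      motive (.wedge r t0 t1 rest)) :
    ∀ t, motive t
  | .eps => eps
  | .wedge r t0 t1 rest =>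
      wedge r t0 t1 rest (LTree.induction eps wedge t0) (LTree.induction eps wedge t1)
        fun t _ => LTree.induction eps wedge t
decreasing_by all_goals (first
  | (have h := List.sizeOf_lt_of_mem ‹t ∈ rest›; simp_wf; omega)
  | (simp_wf; omega))

@[elab_as_elim]
theorem PTree.induction {motive : PTree → Prop} (eps : motive .eps)
    (wedge : ∀ s0 s1 rest, motive s0 → motive s1 → (∀ s ∈ rest, motive s) →
      motive (.wedge s0 s1 rest)) :
    ∀ s, motive s
  | .eps => eps
  | .wedge s0 s1 rest =>
      wedge s0 s1 rest (PTree.induction eps wedge s0) (PTree.induction eps wedge s1)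
        fun s _ => PTree.induction eps wedge s
decreasing_by all_goals (first
  | (have h := List.sizeOf_lt_of_mem ‹s ∈ rest›; simp_wf; omega)
  | (simp_wf; omega))

namespace LTree

@[simp] lemma levels_eps : (LTree.eps).levels = [] := by rw [levels]

@[simp] lemma brLevels_eps : (LTree.eps).brLevels = [] := by rw [brLevels]

@[simp] lemma addLevels_eps (c : ℕ) : (LTree.eps).addLevels c = .eps := by rw [addLevels]

lemma levels_wedge (r : ℕ) (t0 t1 : LTree) (rest : List LTree) :
    (wedge r t0 t1 rest).levels = r :: ((t0 :: t1 :: rest).map levels).flatten := by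
  rw [levels]
  simp

lemma brLevels_wedge (r : ℕ) (t0 t1 : LTree) (rest : List LTree) :
    (wedge r t0 t1 rest).brLevels =
      t0.brLevels ++ r :: t1.brLevels ++ (rest.map fun t => r :: t.brLevels).flatten := by
  rw [brLevels]
  simp

lemma cons_brLevels_wedge (r : ℕ) (t0 t1 : LTree) (rest : List LTree) :
    r :: (wedge r t0 t1 rest).brLevels =
      ((t0 :: t1 :: rest).map fun t => r :: t.brLevels).flatten := by
  simp [brLevels_wedge]

lemma addLevels_wedge (c r : ℕ) (t0 t1 : LTree) (rest : List LTree) :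
    (wedge r t0 t1 rest).addLevels c =
      .wedge (r + c) (t0.addLevels c) (t1.addLevels c) (rest.map (addLevels c)) := by
  rw [addLevels]
  simp

lemma mem_brLevels_iff {t : LTree} {x : ℕ} : x ∈ t.brLevels ↔ x ∈ t.levels := by
  induction t using LTree.induction with
  | eps => simp
  | wedge r t0 t1 rest ih0 ih1 ihr =>
      simp only [brLevels_wedge, levels_wedge, List.mem_append, List.mem_cons, List.mem_flatten,
        List.mem_map, ih0, ih1]
      constructor <;> aesop

lemma levels_addLevels (c : ℕ) (t : LTree) :
    (t.addLevels c).levels = t.levels.map (· + c) := by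
  induction t using LTree.induction with
  | eps => simp
  | wedge r t0 t1 rest ih0 ih1 ihr =>
      simp only [addLevels_wedge, levels_wedge, List.map_cons, List.map_flatten, List.map_map,
        ih0, ih1]
      congr 4
      exact List.map_congr_left ihr

lemma brLevels_addLevels (c : ℕ) (t : LTree) :
    (t.addLevels c).brLevels = t.brLevels.map (· + c) := by
  induction t using LTree.induction with
  | eps => simp
  | wedge r t0 t1 rest ih0 ih1 ihr =>
      simp only [addLevels_wedge, brLevels_wedge, List.map_append, List.map_cons,
        List.map_flatten, List.map_map, ih0, ih1]
      congr 2
      exact List.map_congr_left fun t ht => by simp [ihr t ht]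

lemma numLevels_eq_sup (t : LTree) : t.numLevels = t.levels.toFinset.sup id :=
  List.foldr_max_eq_sup _

lemma le_numLevels {t : LTree} {x : ℕ} (hx : x ∈ t.levels) : x ≤ t.numLevels := by
  rw [numLevels_eq_sup]
  exact Finset.le_sup (f := id) (List.mem_toFinset.2 hx)

lemma numLevels_addLevels (c : ℕ) (t : LTree) : (t.addLevels c).numLevels - c = t.numLevels := by
  rw [numLevels, numLevels, levels_addLevels]
  induction t.levels with
  | nil => simp
  | cons a l ih => simp only [List.map_cons, List.foldr_cons]; omega

@[simp] lemma addLevels_zero (t : LTree) : t.addLevels 0 = t := by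
  induction t using LTree.induction with
  | eps => simp
  | wedge r t0 t1 rest ih0 ih1 ihr =>
      rw [addLevels_wedge, ih0, ih1, List.map_congr_left ihr, List.map_id']
      rfl

lemma addLevels_addLevels (a c : ℕ) (t : LTree) :
    (t.addLevels a).addLevels c = t.addLevels (a + c) := by
  induction t using LTree.induction with
  | eps => simp
  | wedge r t0 t1 rest ih0 ih1 ihr =>
      simp only [addLevels_wedge, ih0, ih1, List.map_map, add_assoc]
      congr 1
      exact List.map_congr_left ihr

end LTree

lemma IncrFrom.lt_of_mem_levels {lo : ℕ} {t : LTree} (h : IncrFrom lo t) {x : ℕ}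
    (hx : x ∈ t.levels) : lo < x := by
  induction t using LTree.induction generalizing lo with
  | eps => simp at hx
  | wedge r t0 t1 rest ih0 ih1 ihr =>
      obtain _ | ⟨_, _, _, _, _, hr, h0, h1, hrest⟩ := h
      simp only [LTree.levels_wedge, List.mem_cons, List.map_cons, List.flatten_cons,
        List.mem_append, List.mem_flatten, List.mem_map] at hx
      rcases hx with rfl | hx0 | hx1 | ⟨_, ⟨t, ht, rfl⟩, hx⟩
      · exact hr
      · exact hr.trans (ih0 h0 hx0)
      · exact hr.trans (ih1 h1 hx1)
      · exact hr.trans (ihr t ht (hrest t ht) hx)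

lemma IncrFrom.of_lt_levels {lo c : ℕ} {t : LTree} (h : IncrFrom lo t)
    (hc : ∀ x ∈ t.levels, c < x) : IncrFrom c t := by
  obtain _ | ⟨_, r, _, _, _, _, h0, h1, hrest⟩ := h
  · exact .eps c
  · exact .wedge c r _ _ _ (hc r (by simp [LTree.levels_wedge])) h0 h1 hrest

lemma Fgt_wedge (r : ℕ) (t0 t1 : LTree) (rest : List LTree) :
    Fgt (.wedge r t0 t1 rest) = .wedge (Fgt t0) (Fgt t1) (rest.map Fgt) := by
  rw [Fgt]
  simp

def stackLevels : ℕ → List LTree → List LTree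
  | _, [] => []
  | c, u :: us => u.addLevels c :: stackLevels (c + u.numLevels) us

lemma map_addLevels_stackLevels (a c : ℕ) (us : List LTree) :
    (stackLevels a us).map (LTree.addLevels c) = stackLevels (a + c) us := by
  induction us generalizing a with
  | nil => rfl
  | cons u us ih => simp [stackLevels, LTree.addLevels_addLevels, ih, Nat.add_right_comm]

lemma Inc_wedge (s0 s1 : PTree) (rest : List PTree) :
    Inc (.wedge s0 s1 rest) =
      match stackLevels 1 (Inc s0 :: Inc s1 :: rest.map Inc) with
      | t0 :: t1 :: ts => .wedge 1 t0 t1 ts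
      | _ => .eps := by
  have hzip : ∀ (vs : List LTree) (c : ℕ),
      ((vs.zip ((vs.map LTree.numLevels).scanl (· + ·) c)).map fun p => p.1.addLevels p.2) =
        stackLevels c vs := by
    intro vs
    induction vs with
    | nil => intro c; rfl
    | cons v vs ih => intro c; simp [stackLevels, ih]
  rw [Inc]
  simp only [List.attach_map_val, hzip]

/-- A word avoids the patterns `312` and `212`: in every subword `a b c` with `b < c`, also
`a < c`. These are the words of levels of branchings of left increasing trees. -/
def Avoids312 (w : List ℕ) : Prop :=
  ∀ a b c : ℕ, [a, b, c] <+ w → b < c → a < c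

namespace Avoids312

lemma sublist {w w' : List ℕ} (h : Avoids312 w) (hw : w' <+ w) : Avoids312 w' :=
  fun a b c habc => h a b c (habc.trans hw)

lemma map {w : List ℕ} {g : ℕ → ℕ} (h : Avoids312 w) (hg : StrictMono g) :
    Avoids312 (w.map g) := by
  intro a b c habc hbc
  obtain ⟨l, hl, hgl⟩ := List.sublist_map_iff.1 habc
  match l, hgl with
  | [a', b', c'], hgl =>
      simp only [List.map_cons, List.map_nil, List.cons.injEq, and_true] at hgl
      obtain ⟨rfl, rfl, rfl⟩ := hgl
      exact hg (h a' b' c' hl (hg.lt_iff_lt.1 hbc))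

lemma cons {w : List ℕ} {m : ℕ} (h : Avoids312 w) (hm : ∀ x ∈ w, m ≤ x) :
    Avoids312 (m :: w) := by
  intro a b c habc hbc
  rcases List.sublist_cons_iff.1 habc with habc | ⟨_, hr, hbc'⟩
  · exact h a b c habc hbc
  · simp only [List.cons.injEq] at hr
    obtain ⟨rfl, rfl⟩ := hr
    exact (hm b (hbc'.subset (by simp))).trans_lt hbc

lemma append {u v : List ℕ} (hu : Avoids312 u) (hv : Avoids312 v)
    (huv : ∀ z ∈ v, (∀ x ∈ u ++ v, z ≤ x) ∨ ∀ x ∈ u, x < z) : Avoids312 (u ++ v) := by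
  intro a b c habc hbc
  obtain ⟨l₁, l₂, hl, h₁, h₂⟩ := List.sublist_append_iff.1 habc
  have hbmem : b ∈ u ++ v := habc.subset (by simp)
  have hc : c ∈ v → a ∈ u → a < c := fun hc ha =>
    (huv c hc).resolve_left (fun hmin => (hmin b hbmem).not_gt hbc) a ha
  match l₁, l₂, hl with
  | [], _, rfl => exact hv a b c h₂ hbc
  | [_], _, rfl => exact hc (h₂.subset (by simp)) (h₁.subset (by simp))
  | [_, _], _, rfl => exact hc (h₂.subset (by simp)) (h₁.subset (by simp))
  | [_, _, _], [], rfl => exact hu a b c h₁ hbc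
  | _ :: _ :: _ :: _ :: _, _, hl => simp at hl

lemma pairwise_of_flatten {r : ℕ} {ws : List (List ℕ)} (h : Avoids312 (ws.map (r :: ·)).flatten)
    (hr : ∀ w ∈ ws, ∀ x ∈ w, r < x) : ws.Pairwise fun u v => ∀ x ∈ u, ∀ y ∈ v, x < y := by
  induction ws with
  | nil => exact .nil
  | cons w ws ih =>
      simp only [List.map_cons, List.flatten_cons] at h
      refine List.Pairwise.cons (fun v hv x hx y hy => ?_)
        (ih (h.sublist (List.sublist_append_right _ _)) fun u hu => hr u (by simp [hu]))
      have hsub : [x] ++ [r, y] <+ (r :: w) ++ (ws.map (r :: ·)).flatten :=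
        (List.singleton_sublist.2 (List.mem_cons_of_mem r hx)).append
          ((List.cons_sublist_cons.2 (List.singleton_sublist.2 hy)).trans
            (List.sublist_flatten_of_mem (List.mem_map_of_mem hv)))
      exact h x r y hsub (hr v (by simp [hv]) y hy)

/-- Here `w'` is, up to the strictly monotone relabelling `g`, the subword of `w` along `f`. -/
lemma of_embedding {w w' : List ℕ} (hw : Avoids312 w) {f g : ℕ → ℕ} {S : Set ℕ}
    (hf : StrictMonoOn f (Set.Iio w'.length)) (hg : StrictMonoOn g S)
    (hw' : ∀ j < w'.length, ∃ v ∈ S, w[f j]? = some v ∧ w'[j]? = some (g v)) :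
    Avoids312 w' := by
  intro a b c habc hbc
  obtain ⟨e, he⟩ := List.sublist_iff_exists_orderEmbedding_getElem?_eq.1 habc
  have hlt : ∀ n, n < 3 → e n < w'.length := fun n hn => by
    by_contra hn'
    have := he n
    rw [List.getElem?_eq_none (show w'.length ≤ e n by omega)] at this
    interval_cases n <;> simp at this
  obtain ⟨v₀, hv₀, hw₀, hw'₀⟩ := hw' (e 0) (hlt 0 (by omega))
  obtain ⟨v₁, hv₁, hw₁, hw'₁⟩ := hw' (e 1) (hlt 1 (by omega))
  obtain ⟨v₂, hv₂, hw₂, hw'₂⟩ := hw' (e 2) (hlt 2 (by omega))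
  have ha : g v₀ = a := by simpa [← he 0] using hw'₀.symm
  have hb : g v₁ = b := by simpa [← he 1] using hw'₁.symm
  have hc : g v₂ = c := by simpa [← he 2] using hw'₂.symm
  subst ha hb hc
  have hmono : ∀ m n, m < n → n < 3 → f (e m) < f (e n) := fun m n hmn hn =>
    hf (hlt m (by omega)) (hlt n hn) (e.strictMono hmn)
  have hsub := List.sublist_of_getElem?_eq_some (hmono 0 1 (by omega) (by omega))
    (hmono 1 2 (by omega) (by omega)) hw₀ hw₁ hw₂
  exact hg hv₀ hv₂ (hw v₀ v₁ v₂ hsub ((hg.lt_iff_lt hv₁ hv₂).1 hbc))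

end Avoids312

lemma avoids312_flatten_stackLevels (c : ℕ) {vs : List LTree}
    (hvs : ∀ v ∈ vs, Avoids312 v.brLevels ∧ ∀ x ∈ v.brLevels, 0 < x) :
    Avoids312 ((stackLevels c vs).map fun u => 1 :: u.brLevels).flatten ∧
      ∀ x ∈ ((stackLevels c vs).map fun u => 1 :: u.brLevels).flatten, x = 1 ∨ c < x := by
  induction vs generalizing c with
  | nil => exact ⟨fun _ _ _ h => by simp [stackLevels] at h, by simp [stackLevels]⟩
  | cons v vs ih =>
      obtain ⟨hv, hvpos⟩ := hvs v (by simp)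
      obtain ⟨hW, hWmem⟩ := ih (c + v.numLevels) fun u hu => hvs u (by simp [hu])
      have hle : ∀ y ∈ v.brLevels, y ≤ v.numLevels := fun y hy =>
        LTree.le_numLevels (LTree.mem_brLevels_iff.1 hy)
      simp only [stackLevels, List.map_cons, List.flatten_cons, LTree.brLevels_addLevels]
      refine ⟨?_, ?_⟩
      · refine ((hv.map fun _ _ h => Nat.add_lt_add_right h c).cons ?_).append hW ?_
        · simp only [List.mem_map]
          rintro _ ⟨y, hy, rfl⟩
          have := hvpos y hy
          omega
        · intro z hz
          by_cases hz1 : z = 1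
          · left
            simp only [List.mem_append, List.mem_cons, List.mem_map]
            rintro x ((rfl | ⟨y, hy, rfl⟩) | hx)
            · omega
            · have := hvpos y hy; omega
            · rcases hWmem x hx with rfl | hx <;> omega
          · right
            have hz := (hWmem z hz).resolve_left hz1
            simp only [List.mem_cons, List.mem_map]
            rintro x (rfl | ⟨y, hy, rfl⟩)
            · omega
            · have := hle y hy; omega
      · simp only [List.cons_append, List.mem_cons, List.mem_append, List.mem_map]
        rintro x (rfl | ⟨y, hy, rfl⟩ | hx)
        · exact .inl rfl
        · have := hvpos y hy; right; omega
        · rcases hWmem x hx with rfl | hx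
          · exact .inl rfl
          · right; omega

lemma avoids312_brLevels_Inc_and_pos (s : PTree) :
    Avoids312 (Inc s).brLevels ∧ ∀ x ∈ (Inc s).brLevels, 0 < x := by
  induction s using PTree.induction with
  | eps => simp [Inc, Avoids312]
  | wedge s0 s1 rest ih0 ih1 ihr =>
      have hword : 1 :: (Inc (.wedge s0 s1 rest)).brLevels =
          ((stackLevels 1 (Inc s0 :: Inc s1 :: rest.map Inc)).map
            fun u => 1 :: u.brLevels).flatten := by
        rw [Inc_wedge]
        simp only [stackLevels]
        rw [LTree.cons_brLevels_wedge]
      obtain ⟨hW, hWmem⟩ := avoids312_flatten_stackLevels 1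
        (vs := Inc s0 :: Inc s1 :: rest.map Inc) (by
          simp only [List.mem_cons, List.mem_map]
          rintro v (rfl | rfl | ⟨s, hs, rfl⟩)
          exacts [ih0, ih1, ihr s hs])
      rw [← hword] at hW hWmem
      refine ⟨hW.sublist (List.sublist_cons_self _ _), fun x hx => ?_⟩
      rcases hWmem x (List.mem_cons_of_mem _ hx) with rfl | hx <;> omega

lemma stackLevels_map_Inc_Fgt {us : List LTree} {c K : ℕ}
    (hlev : (us.map LTree.levels).flatten.toFinset = Icc (c + 1) K)
    (hpair : us.Pairwise fun u v => ∀ x ∈ u.levels, ∀ y ∈ v.levels, x < y)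
    (hus : ∀ u ∈ us, ∀ c', u.levels.toFinset = Icc (c' + 1) u.numLevels →
      (Inc (Fgt u)).addLevels c' = u) :
    stackLevels c (us.map fun u => Inc (Fgt u)) = us := by
  induction us generalizing c with
  | nil => rfl
  | cons u us ih =>
      rw [List.pairwise_cons] at hpair
      simp only [List.map_cons, List.flatten_cons, List.toFinset_append] at hlev
      obtain ⟨hu, hrest⟩ := Finset.eq_Icc_of_union_eq_Icc
        (fun x hx y hy => by
          simp only [List.mem_toFinset, List.mem_flatten, List.mem_map] at hx hy
          obtain ⟨_, ⟨v, hv, rfl⟩, hy⟩ := hy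
          exact hpair.1 v hv x hx y hy) hlev
      rw [← LTree.numLevels_eq_sup] at hu hrest
      have hInc := hus u (by simp) c hu
      have hnum := LTree.numLevels_addLevels c (Inc (Fgt u))
      rw [hInc] at hnum
      simp only [List.map_cons, stackLevels, hInc, ← hnum]
      rw [show c + (u.numLevels - c) = max c u.numLevels by omega]
      exact congrArg _ (ih hrest hpair.2 fun v hv => hus v (by simp [hv]))

lemma Avoids312.subtrees_of_flatten {r : ℕ} {us : List LTree}
    (h : Avoids312 (us.map fun u => r :: u.brLevels).flatten)
    (hgt : ∀ u ∈ us, ∀ x ∈ u.levels, r < x) :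
    (∀ u ∈ us, Avoids312 u.brLevels) ∧
      us.Pairwise fun u v => ∀ x ∈ u.levels, ∀ y ∈ v.levels, x < y := by
  refine ⟨fun u hu => h.sublist <| (List.sublist_cons_self _ _).trans
    (List.sublist_flatten_of_mem (List.mem_map_of_mem hu)), ?_⟩
  have := Avoids312.pairwise_of_flatten (ws := us.map LTree.brLevels)
    (by rw [List.map_map]; exact h) (by
      simp only [List.mem_map]
      rintro _ ⟨u, hu, rfl⟩ x hx
      exact hgt u hu x (LTree.mem_brLevels_iff.1 hx))
  simpa only [List.pairwise_map, LTree.mem_brLevels_iff] using this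

lemma addLevels_Inc_Fgt_wedge {c r : ℕ} {t0 t1 : LTree} {rest : List LTree}
    (h : stackLevels (c + 1) ((t0 :: t1 :: rest).map fun u => Inc (Fgt u)) = t0 :: t1 :: rest) :
    (Inc (Fgt (.wedge r t0 t1 rest))).addLevels c = .wedge (c + 1) t0 t1 rest := by
  rw [add_comm, ← map_addLevels_stackLevels] at h
  simp only [List.map_cons, stackLevels, List.cons.injEq] at h
  obtain ⟨h0, h1, hrest⟩ := h
  rw [Fgt_wedge, Inc_wedge]
  simp only [stackLevels, LTree.addLevels_wedge, h0, h1, List.map_map]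
  rw [Nat.add_comm 1 c]
  exact congrArg _ hrest

lemma addLevels_Inc_Fgt {t : LTree} {c : ℕ} (hinc : IncrFrom c t)
    (hstd : t.levels.toFinset = Icc (c + 1) t.numLevels) (hav : Avoids312 t.brLevels) :
    (Inc (Fgt t)).addLevels c = t := by
  induction t using LTree.induction generalizing c with
  | eps => simp [Fgt, Inc]
  | wedge r t0 t1 rest ih0 ih1 ihr =>
      obtain ⟨us, hus⟩ : ∃ us, us = t0 :: t1 :: rest := ⟨_, rfl⟩
      have hlt : ∀ x ∈ (LTree.wedge r t0 t1 rest).levels, c < x := fun x hx =>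
        hinc.lt_of_mem_levels hx
      obtain _ | ⟨_, _, _, _, _, -, h0, h1, hrest⟩ := hinc
      have hsub : ∀ u ∈ us, IncrFrom r u := by
        simp only [hus, List.mem_cons]
        rintro u (rfl | rfl | hu)
        exacts [h0, h1, hrest u hu]
      have hgt : ∀ u ∈ us, ∀ x ∈ u.levels, r < x := fun u hu x hx =>
        (hsub u hu).lt_of_mem_levels hx
      have hlevels : (LTree.wedge r t0 t1 rest).levels = r :: (us.map LTree.levels).flatten := by
        rw [hus, LTree.levels_wedge]
      obtain ⟨rfl, hunion⟩ := Finset.eq_and_eq_Icc_of_insert_eq_Icc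
        (F := (us.map LTree.levels).flatten.toFinset)
        (by
          simp only [List.mem_toFinset, List.mem_flatten, List.mem_map]
          rintro x ⟨_, ⟨u, hu, rfl⟩, hx⟩
          exact hgt u hu x hx)
        (by rw [← List.toFinset_cons, ← hlevels, hstd])
      have hword : Avoids312 (us.map fun u => (c + 1) :: u.brLevels).flatten := by
        rw [hus, ← LTree.cons_brLevels_wedge]
        exact hav.cons fun x hx => hlt x (LTree.mem_brLevels_iff.1 hx)
      obtain ⟨havs, hpair⟩ := hword.subtrees_of_flatten hgt
      have ih : ∀ u ∈ us, ∀ c', u.levels.toFinset = Icc (c' + 1) u.numLevels →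
          (Inc (Fgt u)).addLevels c' = u := by
        intro u hu c' hu'
        have hinc' : IncrFrom c' u := (hsub u hu).of_lt_levels fun x hx => by
          have := (Finset.mem_Icc.1 (hu' ▸ List.mem_toFinset.2 hx)).1
          omega
        have hav' := havs u hu
        simp only [hus, List.mem_cons] at hu
        rcases hu with rfl | rfl | hu
        exacts [ih0 hinc' hu' hav', ih1 hinc' hu' hav', ihr u hu hinc' hu' hav']
      subst hus
      exact addLevels_Inc_Fgt_wedge (stackLevels_map_Inc_Fgt hunion hpair ih)

lemma Inc_Fgt_eq {t : LTree} (ht : IsIncTree t) (hav : Avoids312 t.brLevels) :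
    Inc (Fgt t) = t := by
  simpa using addLevels_Inc_Fgt ht.1 (by simpa using ht.2) hav

lemma lt_of_rankIn_lt {A : Finset ℕ} {x y : ℕ} (h : rankIn A x < rankIn A y) : x < y := by
  by_contra hxy
  exact h.not_ge (Finset.card_le_card fun z hz => by
    simp only [Finset.mem_filter] at hz ⊢
    exact ⟨hz.1, by omega⟩)

lemma mem_sigmaOf_getD_iff (t : LTree) (x k : ℕ) :
    x ∈ (sigmaOf t).getD k ∅ ↔ 0 < x ∧ t.brLevels[x - 1]? = some (k + 1) := by
  rw [sigmaOf, List.getD_eq_getElem?_getD, List.getElem?_map]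
  by_cases hk : k < t.brLevels.foldr max 0
  · rw [List.getElem?_range hk]
    simp only [Option.map_some, Option.getD_some, Finset.mem_image, List.mem_toFinset,
      List.mem_filter, List.mem_range, decide_eq_true_eq, List.getElem?_eq_some_iff]
    constructor
    · rintro ⟨j, ⟨hj, hjk⟩, rfl⟩
      refine ⟨by omega, hj, ?_⟩
      simpa [List.getElem?_eq_getElem hj] using hjk
    · rintro ⟨hx, hlen, hxk⟩
      exact ⟨x - 1, ⟨hlen, by simp [List.getElem?_eq_getElem hlen, hxk]⟩, by omega⟩
  · rw [List.getElem?_eq_none (by simpa using hk)]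
    simp only [Option.map_none, Option.getD_none, Finset.notMem_empty, false_iff, not_and]
    intro _ hx
    have := Finset.le_sup (f := id) (List.mem_toFinset.2 (List.mem_of_getElem? hx))
    rw [← List.foldr_max_eq_sup] at this
    exact hk (by simpa using this)

def restrictBlocks (A : Finset ℕ) (L : SC) : SC :=
  L.map fun B => (B ∩ A).image (rankIn A)

lemma restrictSC_eq_filter (A : Finset ℕ) (L : SC) :
    restrictSC A L = (restrictBlocks A L).filter fun B => decide B.Nonempty := rfl

lemma exists_of_sigmaOf_eq_restrictSC {t t' : LTree} {A : Finset ℕ}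
    (hσ : sigmaOf t' = restrictSC A (sigmaOf t)) {j v : ℕ} (hj : t'.brLevels[j]? = some v)
    (hv : 0 < v) :
    ∃ x i, ∃ hi : i < (restrictBlocks A (sigmaOf t)).length,
      rankIn A x = j + 1 ∧ 0 < x ∧ t.brLevels[x - 1]? = some (i + 1) ∧
      (restrictBlocks A (sigmaOf t))[i].Nonempty ∧
      ((restrictBlocks A (sigmaOf t)).take i).countP (fun B => decide B.Nonempty) + 1 = v := by
  have hmem : j + 1 ∈ (sigmaOf t').getD (v - 1) ∅ := by
    rw [mem_sigmaOf_getD_iff]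
    simp [hj, Nat.sub_add_cancel hv]
  rw [hσ, restrictSC_eq_filter] at hmem
  obtain ⟨i, hi, hy, hp, hc⟩ := List.exists_of_mem_getD_filter hmem
  simp only [restrictBlocks, List.getElem_map, Finset.mem_image, Finset.mem_inter] at hy
  obtain ⟨x, ⟨hxσ, -⟩, hrank⟩ := hy
  rw [← List.getD_eq_getElem _ ∅] at hxσ
  obtain ⟨hx0, hw⟩ := (mem_sigmaOf_getD_iff t x i).1 hxσ
  exact ⟨x, i, hi, hrank, hx0, hw, by simpa using hp, by omega⟩

/-- The word of a contraction is, up to an order preserving relabelling of the levels, a subword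
of the original word: position `j` comes from the element of `A` of rank `j + 1`, and a block
of `P|_A` sits at the level given by the number of nonempty blocks `B ∩ A` before it. -/
lemma avoids312_of_sigmaOf_eq_restrictSC {t t' : LTree} {A : Finset ℕ}
    (hσ : sigmaOf t' = restrictSC A (sigmaOf t)) (hpos : ∀ x ∈ t'.brLevels, 0 < x)
    (hav : Avoids312 t.brLevels) : Avoids312 t'.brLevels := by
  set M := restrictBlocks A (sigmaOf t)
  set p : Finset ℕ → Bool := fun B => decide B.Nonempty
  have hkey : ∀ j, ∃ x, j < t'.brLevels.length → rankIn A x = j + 1 ∧ 0 < x ∧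
      ∃ i, ∃ hi : i < M.length, p M[i] ∧ t.brLevels[x - 1]? = some (i + 1) ∧
        t'.brLevels[j]? = some ((M.take i).countP p + 1) := by
    intro j
    by_cases hj : j < t'.brLevels.length
    · obtain ⟨x, i, hi, hrank, hx0, hw, hp, hc⟩ := exists_of_sigmaOf_eq_restrictSC hσ
        (List.getElem?_eq_getElem hj) (hpos _ (List.getElem_mem hj))
      exact ⟨x, fun _ => ⟨hrank, hx0, i, hi, by simpa [p] using hp, hw,
        by rw [hc, List.getElem?_eq_getElem hj]⟩⟩
    · exact ⟨0, fun h => absurd h hj⟩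
  choose f hf using hkey
  refine hav.of_embedding (f := fun j => f j - 1) (g := fun v => (M.take (v - 1)).countP p + 1)
    (S := {v | ∃ i, ∃ hi : i < M.length, p M[i] ∧ v = i + 1}) ?_ ?_ ?_
  · intro j₁ hj₁ j₂ hj₂ hj
    obtain ⟨h₁, h₁pos, -⟩ := hf j₁ hj₁
    obtain ⟨h₂, -⟩ := hf j₂ hj₂
    have := lt_of_rankIn_lt (A := A) (x := f j₁) (y := f j₂) (by omega)
    simp only
    omega
  · rintro _ ⟨i₁, hi₁, hp₁, rfl⟩ _ ⟨i₂, -, -, rfl⟩ hi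
    simpa using List.countP_take_lt_countP_take (by omega) hi₁ hp₁
  · intro j hj
    obtain ⟨-, -, i, hi, hp, hw, hw'⟩ := hf j hj
    exact ⟨i + 1, ⟨i, hi, hp, rfl⟩, hw, by simpa using hw'⟩

theorem contraction_of_left_increasing_general (P : SC)
    (t : LTree) (hsigma : sigmaOf t = P)
    (hleft : ∃ s : PTree, Inc s = t)
    (A : Finset ℕ) :
    ∀ t' : LTree, IsIncTree t' → sigmaOf t' = restrictSC A P →
      ∃ s' : PTree, Inc s' = t' := by
  rintro t' ht' hσ
  obtain ⟨s, rfl⟩ := hleft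
  subst hsigma
  have hpos : ∀ x ∈ t'.brLevels, 0 < x := fun x hx =>
    ht'.1.lt_of_mem_levels (LTree.mem_brLevels_iff.1 hx)
  exact ⟨Fgt t', Inc_Fgt_eq ht'
    (avoids312_of_sigmaOf_eq_restrictSC hσ hpos (avoids312_brLevels_Inc_and_pos s).1)⟩

/-- **Corollary.** Any contraction of a left increasing tree is left increasing:
if the increasing tree `τ(P)` is left increasing and `A ⊆ [n]`, then the
`A`-contraction `τ(P|_A)` is left increasing. -/
theorem contraction_of_left_increasing (n : ℕ) (P : SC) (hP : IsSetComp n P)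
    (t : LTree) (ht : IsIncTree t) (hsigma : sigmaOf t = P)
    (hleft : ∃ s : PTree, Inc s = t)
    (A : Finset ℕ) (hA : A ⊆ Finset.Icc 1 n) :
    ∀ t' : LTree, IsIncTree t' → sigmaOf t' = restrictSC A P →
      ∃ s' : PTree, Inc s' = t' :=
  contraction_of_left_increasing_general P t hsigma hleft A
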